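/- arXiv:1003.2588 — 7 statements merged into one kernel-verified Lean document; each statement's English description precedes it below -/
import Mathlib

section
/- Define Σ₀ : ℝ^{k+1} → ℝ² by Σ₀(x₀,…,x_k) = (x₀, Σ_{i=1}^k x_i). Let 0 ≤ s ≤ k−2 be an integer. Then every Σ₀-set τ ⊆ {0,1}^{k+1} is contained in some integer translate x + Ξ^k_s of the sandwich Ξ^k_s, where x ∈ ℤ^{k+1}. -/
/-- The `(k,s)`-sandwich `Ξ^k_s ⊆ ℤ × ℤ^k`. -/
def Sandwich (k : ℕ) (s : ℤ) : Set (ℤ × (Fin k → ℤ)) :=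
  {p | (∀ i, p.2 i = 0 ∨ p.2 i = 1) ∧
    ((p.1 = -1 ∧ (∑ i, p.2 i) < s) ∨
     (p.1 = 0 ∧ (∑ i, p.2 i) < (k : ℤ)) ∨
     (p.1 = 1 ∧ s < (∑ i, p.2 i)))}

/-- The 0-1 cube `{0,1}^{1+k} ⊆ ℤ × ℤ^k`. -/
def Cube (k : ℕ) : Set (ℤ × (Fin k → ℤ)) :=
  {p | (p.1 = 0 ∨ p.1 = 1) ∧ (∀ i, p.2 i = 0 ∨ p.2 i = 1)}

/-- `τ ⊆ {0,1}^{1+k}` is a `Σ₀`-set: it lies in a facet of the cube, and its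
image under `Σ₀ : p ↦ (p.1, Σᵢ p.2 i)` lies in a triangle
`{(0,a),(0,a+1),(1,a+1)}` or `{(0,a),(1,a),(1,a+1)}` for some `0 ≤ a ≤ k-1`. -/
def IsSigmaZeroSet (k : ℕ) (τ : Set (ℤ × (Fin k → ℤ))) : Prop :=
  τ ⊆ Cube k ∧
  ((∃ l : ℤ, (l = 0 ∨ l = 1) ∧ ∀ p ∈ τ, p.1 = l) ∨
   (∃ γ : Fin k, ∃ l : ℤ, (l = 0 ∨ l = 1) ∧ ∀ p ∈ τ, p.2 γ = l)) ∧
  (∃ a : ℕ, a + 1 ≤ k ∧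
    ((∀ p ∈ τ, (p.1, ∑ i, p.2 i) = ((0 : ℤ), (a : ℤ)) ∨
        (p.1, ∑ i, p.2 i) = ((0 : ℤ), (a : ℤ) + 1) ∨
        (p.1, ∑ i, p.2 i) = ((1 : ℤ), (a : ℤ) + 1)) ∨
     (∀ p ∈ τ, (p.1, ∑ i, p.2 i) = ((0 : ℤ), (a : ℤ)) ∨
        (p.1, ∑ i, p.2 i) = ((1 : ℤ), (a : ℤ)) ∨
        (p.1, ∑ i, p.2 i) = ((1 : ℤ), (a : ℤ) + 1))))

/-!
Translating by `x` shifts `Σ₀ p = (p₀, Σᵢ pᵢ)` by `Σ₀ x`. For `x = (c, 0)`, and for `x = (c, ±e_γ)`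
with the sign fixed by the facet `p_γ = l` containing `τ`, the `0/1` pattern of the points of `τ`
survives, so the question becomes planar: move the triangle `Σ₀ τ` into the profile
`{-1} × (<s) ∪ {0} × (<k) ∪ {1} × (>s)` of the sandwich. A triangle fits after a shift `(c, 0)`
unless it meets the row `s` in both columns or reaches the row `k`. A facet `p₀ = l` leaves a
single column, which always fits; a facet `p_γ = l` allows the extra row shift `2l - 1` and, for
`l = 0`, keeps `τ` off the row `k`.
-/
def sandwichProfile (k : ℕ) (s : ℤ) : Set (ℤ × ℤ) :=
  {q | (q.1 = -1 ∧ q.2 < s) ∨ (q.1 = 0 ∧ q.2 < k) ∨ (q.1 = 1 ∧ s < q.2)}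

def upperTriangle (a : ℤ) : Set (ℤ × ℤ) := {(0, a), (0, a + 1), (1, a + 1)}

def lowerTriangle (a : ℤ) : Set (ℤ × ℤ) := {(0, a), (1, a), (1, a + 1)}

def sigmaZero (k : ℕ) : ℤ × (Fin k → ℤ) →+ ℤ × ℤ :=
  AddMonoidHom.mk' (fun p => (p.1, ∑ i, p.2 i)) fun p q => by simp [Finset.sum_add_distrib]

@[simp]
theorem sigmaZero_apply {k : ℕ} (p : ℤ × (Fin k → ℤ)) : sigmaZero k p = (p.1, ∑ i, p.2 i) := rfl

theorem mem_sandwich_iff {k : ℕ} {s : ℤ} {p : ℤ × (Fin k → ℤ)} :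
    p ∈ Sandwich k s ↔ (∀ i, p.2 i = 0 ∨ p.2 i = 1) ∧ sigmaZero k p ∈ sandwichProfile k s :=
  Iff.rfl

theorem subset_translate_sandwich_of_forall {k : ℕ} {s : ℤ} {τ : Set (ℤ × (Fin k → ℤ))}
    (x : ℤ × (Fin k → ℤ))
    (h : ∀ p ∈ τ, (∀ i, p.2 i - x.2 i = 0 ∨ p.2 i - x.2 i = 1) ∧
      sigmaZero k p - sigmaZero k x ∈ sandwichProfile k s) :
    τ ⊆ (fun q => x + q) '' Sandwich k s := by
  intro p hp
  rw [Set.image_add_left, Set.mem_preimage, neg_add_eq_sub, mem_sandwich_iff, map_sub]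
  exact h p hp

theorem sum_lt_card_of_apply_lt_one {ι : Type*} [Fintype ι] {f : ι → ℤ} (hf : ∀ i, f i ≤ 1)
    {γ : ι} (hγ : f γ < 1) : ∑ i, f i < Fintype.card ι := by
  simpa using Finset.sum_lt_sum (g := fun _ => (1 : ℤ)) (fun i _ => hf i) ⟨γ, Finset.mem_univ γ, hγ⟩

theorem sub_single_eq_zero_or_eq_one {ι : Type*} [DecidableEq ι] {f : ι → ℤ}
    (hf : ∀ i, f i = 0 ∨ f i = 1) {γ : ι} {l d : ℤ} (hγ : f γ = l) (hl : l = 0 ∨ l = 1)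
    (hd : d = 0 ∨ d = 2 * l - 1) (i : ι) :
    f i - (Pi.single γ d : ι → ℤ) i = 0 ∨ f i - (Pi.single γ d : ι → ℤ) i = 1 := by
  rcases eq_or_ne i γ with rfl | hi
  · simp only [Pi.single_eq_same]
    omega
  · simpa [hi] using hf i

theorem subset_translate_sandwich_of_subset_cube {k : ℕ} {s : ℤ} {τ : Set (ℤ × (Fin k → ℤ))}
    (hcube : τ ⊆ Cube k) (c : ℤ) (h : ∀ p ∈ τ, sigmaZero k p - (c, 0) ∈ sandwichProfile k s) :
    τ ⊆ (fun q => (c, 0) + q) '' Sandwich k s :=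
  subset_translate_sandwich_of_forall _ fun p hp =>
    ⟨fun i => by simpa using (hcube hp).2 i, by simpa using h p hp⟩

theorem subset_translate_sandwich_of_facet {k : ℕ} {s : ℤ} {τ : Set (ℤ × (Fin k → ℤ))}
    (hcube : τ ⊆ Cube k) {γ : Fin k} {l : ℤ} (hγ : ∀ p ∈ τ, p.2 γ = l) (hl : l = 0 ∨ l = 1)
    {c d : ℤ} (hd : d = 0 ∨ d = 2 * l - 1)
    (h : ∀ p ∈ τ, sigmaZero k p - (c, d) ∈ sandwichProfile k s) :
    τ ⊆ (fun q => (c, Pi.single γ d) + q) '' Sandwich k s :=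
  subset_translate_sandwich_of_forall _ fun p hp =>
    ⟨sub_single_eq_zero_or_eq_one (hcube hp).2 (hγ p hp) hl hd,
      by simpa [Finset.sum_pi_single'] using h p hp⟩

section Planar

variable {k : ℕ} {s a : ℤ}

theorem exists_column_sub_mem_sandwichProfile (hs : s + 2 ≤ k) (l : ℤ)
    {T : Set (ℤ × ℤ)} (hT : T = upperTriangle a ∨ T = lowerTriangle a) :
    ∃ c : ℤ, ∀ q ∈ T, q.1 = l → q - (c, 0) ∈ sandwichProfile k s := by
  have hrow : ∀ q ∈ T, q.2 = a ∨ q.2 = a + 1 := by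
    rcases hT with rfl | rfl <;>
      rintro q (rfl | rfl | rfl) <;> simp
  -- the column `l - 1` works at the top since `s < k - 1`
  refine ⟨if a + 1 < k then l else l - 1, fun q hq hql => ?_⟩
  have := hrow q hq
  split_ifs <;> simp only [sandwichProfile, Set.mem_ofPred_eq, Prod.fst_sub, Prod.snd_sub] <;> omega

theorem exists_upperTriangle_sub_mem_sandwichProfile (hs : s + 2 ≤ k) (hak : a + 1 ≤ k)
    {l : ℤ} (hl : l = 0 ∨ l = 1) :
    ∃ c d : ℤ, (d = 0 ∨ d = 2 * l - 1) ∧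
      ∀ q ∈ upperTriangle a, (l = 0 → q.2 < k) → q - (c, d) ∈ sandwichProfile k s := by
  by_cases htop : a + 1 = k
  -- for `l = 1` the row shift `1` brings the top row down to `k - 1 > s`
  · refine ⟨0, l, by omega, ?_⟩
    rintro q (rfl | rfl | rfl) hq <;>
      simp only [sandwichProfile, Set.mem_ofPred_eq, Prod.fst_sub, Prod.snd_sub] at hq ⊢ <;> omega
  by_cases hrow : a + 1 = s
  · refine ⟨l, 2 * l - 1, .inr rfl, ?_⟩
    rintro q (rfl | rfl | rfl) - <;>
      simp only [sandwichProfile, Set.mem_ofPred_eq, Prod.fst_sub, Prod.snd_sub] <;> omega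
  refine ⟨if a + 1 < s then 1 else 0, 0, .inl rfl, ?_⟩
  rintro q (rfl | rfl | rfl) - <;> split_ifs <;>
    simp only [sandwichProfile, Set.mem_ofPred_eq, Prod.fst_sub, Prod.snd_sub] <;> omega

theorem exists_lowerTriangle_sub_mem_sandwichProfile (hs : s + 2 ≤ k) (hak : a + 1 ≤ k)
    {l : ℤ} (hl : l = 0 ∨ l = 1) :
    ∃ c d : ℤ, (d = 0 ∨ d = 2 * l - 1) ∧
      ∀ q ∈ lowerTriangle a, q - (c, d) ∈ sandwichProfile k s := by
  by_cases hrow : a = s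
  · refine ⟨l, 2 * l - 1, .inr rfl, ?_⟩
    rintro q (rfl | rfl | rfl) <;>
      simp only [sandwichProfile, Set.mem_ofPred_eq, Prod.fst_sub, Prod.snd_sub] <;> omega
  refine ⟨if a < s then 1 else 0, 0, .inl rfl, ?_⟩
  rintro q (rfl | rfl | rfl) <;> split_ifs <;>
    simp only [sandwichProfile, Set.mem_ofPred_eq, Prod.fst_sub, Prod.snd_sub] <;> omega

end Planar

/-- Every `Σ₀`-set is covered by an integer translate of the sandwich `Ξ^k_s`,
whenever `0 ≤ s ≤ k - 2`. -/
theorem sigmaZeroSet_subset_translate_sandwich (k : ℕ) (s : ℕ) (hs : s + 2 ≤ k)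
    (τ : Set (ℤ × (Fin k → ℤ))) (hτ : IsSigmaZeroSet k τ) :
    ∃ x : ℤ × (Fin k → ℤ), τ ⊆ (fun q => x + q) '' Sandwich k (s : ℤ) := by
  obtain ⟨hcube, hfacet, a, hak, htri⟩ := hτ
  have hs' : (s : ℤ) + 2 ≤ k := by exact_mod_cast hs
  have hak' : (a : ℤ) + 1 ≤ k := by exact_mod_cast hak
  obtain ⟨T, hT, hτT⟩ : ∃ T, (T = upperTriangle a ∨ T = lowerTriangle a) ∧
      ∀ p ∈ τ, sigmaZero k p ∈ T := by
    rcases htri with h | h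
    exacts [⟨_, .inl rfl, h⟩, ⟨_, .inr rfl, h⟩]
  rcases hfacet with ⟨l, -, hl⟩ | ⟨γ, l, hl01, hl⟩
  · obtain ⟨c, hc⟩ := exists_column_sub_mem_sandwichProfile hs' l hT
    exact ⟨_, subset_translate_sandwich_of_subset_cube hcube c
      fun p hp => hc _ (hτT p hp) (hl p hp)⟩
  rcases hT with rfl | rfl
  · have hrow : ∀ p ∈ τ, l = 0 → (sigmaZero k p).2 < k := fun p hp hl0 => by
      have h01 : ∀ i, p.2 i ≤ 1 := fun i => by rcases (hcube hp).2 i with h | h <;> omega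
      have hγ : p.2 γ < 1 := by rw [hl p hp, hl0]; exact one_pos
      simpa using sum_lt_card_of_apply_lt_one h01 hγ
    obtain ⟨c, d, hd, hcd⟩ := exists_upperTriangle_sub_mem_sandwichProfile hs' hak' hl01
    exact ⟨_, subset_translate_sandwich_of_facet hcube hl hl01 hd
      fun p hp => hcd _ (hτT p hp) (hrow p hp)⟩
  · obtain ⟨c, d, hd, hcd⟩ := exists_lowerTriangle_sub_mem_sandwichProfile hs' hak' hl01
    exact ⟨_, subset_translate_sandwich_of_facet hcube hl hl01 hd fun p hp => hcd _ (hτT p hp)⟩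
end

section
/- Every subset of ℝ³ with at most 5 elements is T-shaped. -/
/-- The set `T_n ⊆ ℝⁿ`, with `T_0 = ∅` and `T_{n+1} = (ℝⁿ × {0}) ∪ (T_n × ℝ₊)`. -/
def Tset : (n : ℕ) → Set (Fin n → ℝ)
  | 0 => ∅
  | n + 1 =>
      {x | x (Fin.last n) = 0 ∨
        ((fun i : Fin n => x i.castSucc) ∈ Tset n ∧ 0 ≤ x (Fin.last n))}

/-- `C ⊆ ℝ^{n+1}` is T-shaped if some invertible affine transformation maps it
into `ℝ × T_n`. -/
def IsTShaped (n : ℕ) (C : Set (Fin (n + 1) → ℝ)) : Prop :=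
  ∃ f : (Fin (n + 1) → ℝ) ≃ᵃ[ℝ] (Fin (n + 1) → ℝ),
    ∀ x ∈ C, (fun i : Fin n => f x i.succ) ∈ Tset n

/-!
If `C` lies in an affine plane `{b = 0}`, it is T-shaped. Otherwise `C` contains an affine basis
`p₀, …, p₃` of `ℝ³` and at most one further point `e`. The barycentric coordinates of `e` sum to
`1`, so one of them, say the `i`-th, is positive. Take `b` to be that coordinate, which vanishes at
the other basis points and is positive at `pᵢ` and `e`, and `a` an affine functional vanishing at
`pᵢ` and `e` whose linear part is independent of that of `b`. Every point of `C` then satisfies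
`b = 0` or `a = 0 ∧ 0 ≤ b`, and `(a, b)` completes to affine coordinates on `ℝ³`.
-/

open Module

theorem IsTShaped.mono {n : ℕ} {C D : Set (Fin (n + 1) → ℝ)} (hD : IsTShaped n D)
    (hCD : C ⊆ D) : IsTShaped n C :=
  let ⟨f, hf⟩ := hD
  ⟨f, fun x hx => hf x (hCD hx)⟩

theorem isTShaped_empty (n : ℕ) : IsTShaped n ∅ :=
  ⟨AffineEquiv.refl ℝ _, by simp⟩

theorem mem_Tset_two {y : Fin 2 → ℝ} : y ∈ Tset 2 ↔ y 1 = 0 ∨ y 0 = 0 ∧ 0 ≤ y 1 := by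
  simp [Tset, Fin.last]

section Dual

variable {K V : Type*} [Field K] [AddCommGroup V] [Module K V] [FiniteDimensional K V]

theorem exists_linearEquiv_apply_succ {n : ℕ} (hV : finrank K V = n + 1)
    {φ : Fin n → Dual K V} (hφ : LinearIndependent K φ) :
    ∃ M : V ≃ₗ[K] (Fin (n + 1) → K), ∀ x i, M x i.succ = φ i x := by
  obtain ⟨χ, hχ⟩ := exists_linearIndependent_cons_of_lt_finrank hφ
    (by rw [Subspace.dual_finrank_eq, hV]; omega)
  have hspan := hχ.span_eq_top_of_card_eq_finrank' (by simp [Subspace.dual_finrank_eq, hV])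
  let L : V →ₗ[K] (Fin (n + 1) → K) := LinearMap.pi (Fin.cons χ φ)
  have hL : Function.Injective L := by
    rw [← LinearMap.ker_eq_bot, LinearMap.ker_eq_bot']
    intro x hx
    rw [← Module.forall_dual_apply_eq_zero_iff K x]
    have hle : Submodule.span K (Set.range (Fin.cons χ φ)) ≤ LinearMap.ker (Dual.eval K V x) :=
      Submodule.span_le.2 (Set.range_subset_iff.2 fun i => congrFun hx i)
    rw [hspan] at hle
    exact fun f => hle Submodule.mem_top
  refine ⟨LinearEquiv.ofBijective L ⟨hL,
    (LinearMap.injective_iff_surjective_of_finrank_eq_finrank (by simp [hV])).1 hL⟩, ?_⟩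
  intro x i
  change L x i.succ = φ i x
  simp [L]

theorem exists_affineMap_linearIndependent (hV : 3 ≤ finrank K V) {ψ : Dual K V} (hψ : ψ ≠ 0)
    (p q : V) : ∃ a : V →ᵃ[K] K, a p = 0 ∧ a q = 0 ∧ LinearIndependent K ![a.linear, ψ] := by
  have hE : 2 ≤ finrank K (LinearMap.ker (Dual.eval K V (q - p))) := by
    have h1 := (Dual.eval K V (q - p)).finrank_range_add_finrank_ker
    have h2 := (LinearMap.range (Dual.eval K V (q - p))).finrank_le
    rw [Subspace.dual_finrank_eq] at h1
    rw [finrank_self] at h2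
    omega
  obtain ⟨φ, hφE, hφψ⟩ : ∃ φ ∈ LinearMap.ker (Dual.eval K V (q - p)), φ ∉ K ∙ ψ :=
    SetLike.not_le_iff_exists.1 fun hle => by
      have := Submodule.finrank_mono hle
      rw [finrank_span_singleton hψ] at this
      omega
  refine ⟨φ.toAffineMap - AffineMap.const K V (φ p), by simp, ?_, ?_⟩
  · simpa [sub_eq_zero] using hφE
  · rw [Submodule.mem_span_singleton] at hφψ
    push Not at hφψ
    simpa [linearIndependent_fin2] using ⟨hψ, hφψ⟩

end Dual

theorem isTShaped_of_affineMaps {n : ℕ} {C : Set (Fin (n + 1) → ℝ)}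
    (φ : Fin n → (Fin (n + 1) → ℝ) →ᵃ[ℝ] ℝ) (hφ : LinearIndependent ℝ fun i => (φ i).linear)
    (hC : ∀ x ∈ C, (fun i => φ i x) ∈ Tset n) : IsTShaped n C := by
  obtain ⟨M, hM⟩ := exists_linearEquiv_apply_succ (by simp) hφ
  refine ⟨M.toAffineEquiv.trans (AffineEquiv.constVAdd ℝ _ (Fin.cons 0 fun i => φ i 0)),
    fun x hx => ?_⟩
  convert hC x hx using 2 with i
  rw [AffineMap.decomp (φ i)]
  simp only [AffineEquiv.trans_apply, AffineEquiv.constVAdd_apply, vadd_eq_add, Pi.add_apply,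
    Fin.cons_succ, LinearEquiv.coe_toAffineEquiv, hM]
  ring

theorem isTShaped_two_of_affineMaps {C : Set (Fin 3 → ℝ)} (a b : (Fin 3 → ℝ) →ᵃ[ℝ] ℝ)
    (hab : LinearIndependent ℝ ![a.linear, b.linear])
    (hC : ∀ x ∈ C, b x = 0 ∨ a x = 0 ∧ 0 ≤ b x) : IsTShaped 2 C :=
  isTShaped_of_affineMaps ![a, b] (by convert hab using 1; ext i; fin_cases i <;> rfl)
    fun x hx => mem_Tset_two.2 (hC x hx)

theorem isTShaped_two_of_affineSpan_ne_top {C : Set (Fin 3 → ℝ)} (hC : affineSpan ℝ C ≠ ⊤) :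
    IsTShaped 2 C := by
  rcases C.eq_empty_or_nonempty with rfl | ⟨p, hp⟩
  · exact isTShaped_empty 2
  have hdir : (affineSpan ℝ C).direction ≠ ⊤ := fun h =>
    hC ((AffineSubspace.direction_eq_top_iff_of_nonempty ⟨p, subset_affineSpan ℝ C hp⟩).1 h)
  obtain ⟨ψ, hψ, hker⟩ := Submodule.exists_le_ker_of_lt_top _ hdir.lt_top
  obtain ⟨a, -, -, ha⟩ := exists_affineMap_linearIndependent (by simp) hψ p p
  refine isTShaped_two_of_affineMaps a (ψ.toAffineMap - AffineMap.const ℝ _ (ψ p))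
    (by simpa using ha) fun x hx => Or.inl ?_
  have : x - p ∈ (affineSpan ℝ C).direction :=
    AffineSubspace.vsub_mem_direction (subset_affineSpan ℝ C hx) (subset_affineSpan ℝ C hp)
  simpa [sub_eq_zero] using hker this

theorem AffineBasis.exists_coord_pos {ι k V P : Type*} [Fintype ι] [Field k] [LinearOrder k]
    [IsStrictOrderedRing k] [AddCommGroup V] [Module k V] [AddTorsor V P]
    (B : AffineBasis ι k P) (e : P) : ∃ i, 0 < B.coord i e := by
  by_contra! h
  linarith [B.sum_coord_apply_eq_one e, Finset.sum_nonpos fun i (_ : i ∈ Finset.univ) => h i]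

theorem AffineBasis.linear_coord_ne_zero {ι k V P : Type*} [Ring k] [Nontrivial k]
    [AddCommGroup V] [Module k V] [AddTorsor V P] (B : AffineBasis ι k P) {i j : ι}
    (hij : i ≠ j) : (B.coord i).linear ≠ 0 := by
  intro h
  have := (B.coord i).linearMap_vsub (B j) (B i)
  rw [h, B.coord_apply_eq, B.coord_apply_ne hij] at this
  simp at this

theorem isTShaped_insert_range_affineBasis {ι : Type*} [Fintype ι]
    (B : AffineBasis ι ℝ (Fin 3 → ℝ)) (e : Fin 3 → ℝ) : IsTShaped 2 (insert e (Set.range B)) := by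
  obtain ⟨i, hi⟩ := B.exists_coord_pos e
  obtain ⟨j, hj⟩ : ∃ j, j ≠ i :=
    Fintype.exists_ne_of_one_lt_card (by simp [B.card_eq_finrank_add_one]) i
  obtain ⟨a, hai, hae, hab⟩ :=
    exists_affineMap_linearIndependent (by simp) (B.linear_coord_ne_zero hj.symm) (B i) e
  refine isTShaped_two_of_affineMaps a (B.coord i) hab ?_
  rintro x (rfl | ⟨j, rfl⟩)
  · exact Or.inr ⟨hae, hi.le⟩
  · by_cases hij : i = j
    · subst hij
      exact Or.inr ⟨hai, by simp⟩
    · exact Or.inl (B.coord_apply_ne hij)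

theorem Set.exists_subset_insert_of_encard_sdiff_le_one {α : Type*} [Nonempty α] {s t : Set α}
    (h : (s \ t).encard ≤ 1) : ∃ e, s ⊆ insert e t := by
  rcases Set.encard_le_one_iff_eq.1 h with h | ⟨e, h⟩
  · exact ⟨Classical.arbitrary α, (Set.sdiff_eq_empty.1 h).trans (Set.subset_insert _ _)⟩
  · exact ⟨e, by rw [Set.insert_eq, Set.union_comm, ← Set.sdiff_subset_iff, h]⟩

/-- Every subset of `ℝ³` with at most 5 elements is T-shaped. -/
theorem tShaped_of_card_le_five (C : Set (Fin 3 → ℝ)) (hC : C.encard ≤ 5) :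
    IsTShaped 2 C := by
  rcases ne_or_eq (affineSpan ℝ C) ⊤ with hspan | hspan
  · exact isTShaped_two_of_affineSpan_ne_top hspan
  obtain ⟨t, htC, hts, hind⟩ := exists_affineIndependent ℝ (Fin 3 → ℝ) C
  have : Fintype t := ((Set.finite_of_encard_le_coe hC).subset htC).fintype
  let B : AffineBasis t ℝ (Fin 3 → ℝ) := ⟨(↑), hind, by rw [Subtype.range_coe, hts, hspan]⟩
  have ht : t.encard = 4 := by
    rw [Set.encard_eq_coe_toFinset_card, Set.toFinset_card, B.card_eq_finrank_add_one]
    simp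
  obtain ⟨e, he⟩ : ∃ e, C ⊆ insert e t := by
    refine Set.exists_subset_insert_of_encard_sdiff_le_one ?_
    rw [Set.encard_sdiff htC (Set.finite_of_encard_eq_coe ht), ht]
    exact (tsub_le_tsub_right hC 4).trans_eq rfl
  exact (isTShaped_insert_range_affineBasis B e).mono
    (by rwa [show Set.range B = t from Subtype.range_coe])
end

section
/- For every n ≥ 1 there exists a set of n² − n + 1 points in ℝⁿ in general position (no n+1 of them lie in a hyperplane), and any such set is not T-shaped; consequently t(ℝⁿ) ≤ n² − n + 1. -/
/-- A set of points of `ℝᵐ` is in general position if no `m + 1` of them lie in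
a common affine hyperplane `{x | Σᵢ v i * x i = c}` (with normal `v ≠ 0`). -/
def InGenPos (m : ℕ) (C : Set (Fin m → ℝ)) : Prop :=
  ∀ F ⊆ C, F.encard = m + 1 →
    ¬ ∃ (v : Fin m → ℝ) (c : ℝ), v ≠ 0 ∧ ∀ x ∈ F, (∑ i, v i * x i) = c

/-!
Every point of `Tₙ` has a vanishing coordinate, so a T-shaped set in `ℝⁿ⁺¹` is covered by the
`n` hyperplanes `{x | f x i = 0}`, `i = 1, …, n`, for an affine automorphism `f`. A set in general
position meets each hyperplane in at most `n + 1` points, hence has at most `n (n + 1)` points if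
it is T-shaped. Points in general position are provided by the moment curve
`t ↦ (t, t², …, tᵐ)`: a hyperplane meets it in the roots of a nonzero polynomial of degree `≤ m`.
-/

open Set Polynomial

def hyperplane {m : ℕ} (v : Fin m → ℝ) (c : ℝ) : Set (Fin m → ℝ) :=
  {x | ∑ i, v i * x i = c}

theorem inGenPos_iff_encard_inter_hyperplane_le {m : ℕ} {C : Set (Fin m → ℝ)} :
    InGenPos m C ↔ ∀ v : Fin m → ℝ, v ≠ 0 → ∀ c, (C ∩ hyperplane v c).encard ≤ m := by
  constructor
  · intro hC v hv c
    by_contra! hlt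
    obtain ⟨F, hFsub, hF⟩ := exists_subset_encard_eq (Order.add_one_le_of_lt hlt)
    exact hC F (hFsub.trans inter_subset_left) hF ⟨v, c, hv, fun x hx => (hFsub hx).2⟩
  · rintro hC F hFC hF ⟨v, c, hv, hFv⟩
    have hle := (encard_le_encard (subset_inter hFC hFv)).trans (hC v hv c)
    rw [hF] at hle
    norm_cast at hle
    omega

theorem InGenPos.encard_le_of_subset_iUnion_hyperplane {m : ℕ} {ι : Type*} [Fintype ι]
    {C : Set (Fin m → ℝ)} (hC : InGenPos m C) {v : ι → Fin m → ℝ} (hv : ∀ i, v i ≠ 0)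
    {c : ι → ℝ} (hcover : C ⊆ ⋃ i, hyperplane (v i) (c i)) :
    C.encard ≤ Fintype.card ι * m := by
  calc C.encard = (⋃ i, C ∩ hyperplane (v i) (c i)).encard := by
        rw [← inter_iUnion, inter_eq_left.2 hcover]
    _ ≤ ∑ i, (C ∩ hyperplane (v i) (c i)).encard := encard_iUnion_le_of_fintype _
    _ ≤ ∑ _i : ι, (m : ℕ∞) :=
        Finset.sum_le_sum fun i _ => inGenPos_iff_encard_inter_hyperplane_le.1 hC _ (hv i) _
    _ = Fintype.card ι * m := by simp

theorem AffineEquiv.exists_setOf_apply_eq_hyperplane {m : ℕ}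
    (f : (Fin m → ℝ) ≃ᵃ[ℝ] (Fin m → ℝ)) (j : Fin m) (a : ℝ) :
    ∃ v : Fin m → ℝ, v ≠ 0 ∧ ∃ c, {x | f x j = a} = hyperplane v c := by
  set v : Fin m → ℝ := fun i => f.linear (fun k => if i = k then 1 else 0) j
  have hlinear : ∀ x, f.linear x j = ∑ i, v i * x i := fun x => by
    rw [show f.linear x = f.linear.toLinearMap x from rfl, LinearMap.pi_apply_eq_sum_univ]
    simp [v, mul_comm]
  have hf : ∀ x, f x j = ∑ i, v i * x i + f 0 j := fun x => by
    have := congrFun (f.toAffineMap.linearMap_vsub x 0) j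
    simp only [vsub_eq_sub, sub_zero, Pi.sub_apply] at this
    rw [← hlinear]
    exact (sub_eq_iff_eq_add.1 this.symm)
  refine ⟨v, fun hv => ?_, a - f 0 j, ?_⟩
  · have hone := hlinear (f.linear.symm (Pi.single j 1))
    simp [hv] at hone
  · ext x
    change f x j = a ↔ _ = _
    rw [hf, eq_sub_iff_add_eq]

theorem exists_eq_zero_of_mem_Tset : ∀ {n : ℕ} {x : Fin n → ℝ}, x ∈ Tset n → ∃ i, x i = 0
  | 0, _, hx => absurd hx (by simp [Tset])
  | n + 1, x, hx => by
    rcases hx with hlast | ⟨hinit, -⟩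
    · exact ⟨Fin.last n, hlast⟩
    · obtain ⟨i, hi⟩ := exists_eq_zero_of_mem_Tset hinit
      exact ⟨i.castSucc, hi⟩

theorem IsTShaped.exists_subset_iUnion_hyperplane {n : ℕ} {C : Set (Fin (n + 1) → ℝ)}
    (hC : IsTShaped n C) :
    ∃ v : Fin n → Fin (n + 1) → ℝ, (∀ i, v i ≠ 0) ∧
      ∃ c : Fin n → ℝ, C ⊆ ⋃ i, hyperplane (v i) (c i) := by
  obtain ⟨f, hf⟩ := hC
  choose v hv c hc using fun i : Fin n => f.exists_setOf_apply_eq_hyperplane i.succ 0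
  refine ⟨v, hv, c, fun x hx => ?_⟩
  obtain ⟨i, hi⟩ := exists_eq_zero_of_mem_Tset (hf x hx)
  exact mem_iUnion.2 ⟨i, hc i ▸ hi⟩

theorem InGenPos.not_isTShaped {n : ℕ} {C : Set (Fin (n + 1) → ℝ)} (hC : InGenPos (n + 1) C)
    (hcard : (n * (n + 1) : ℕ∞) < C.encard) : ¬ IsTShaped n C := by
  intro hT
  obtain ⟨v, hv, c, hcover⟩ := hT.exists_subset_iUnion_hyperplane
  have hle := hC.encard_le_of_subset_iUnion_hyperplane hv hcover
  rw [Fintype.card_fin] at hle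
  exact hcard.not_ge (by exact_mod_cast hle)

def momentCurve (m : ℕ) (t : ℝ) : Fin m → ℝ := fun i => t ^ ((i : ℕ) + 1)

theorem momentCurve_injective (m : ℕ) [NeZero m] : Function.Injective (momentCurve m) :=
  fun t s h => by simpa [momentCurve] using congrFun h 0

theorem encard_preimage_momentCurve_hyperplane_le {m : ℕ} {v : Fin m → ℝ} (hv : v ≠ 0) (c : ℝ) :
    (momentCurve m ⁻¹' hyperplane v c).encard ≤ m := by
  set P : ℝ[X] := ∑ i : Fin m, C (v i) * X ^ ((i : ℕ) + 1) - C c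
  have hcoeff : ∀ i : Fin m, P.coeff ((i : ℕ) + 1) = v i := fun i => by
    simp [P, finsetSum_coeff, Fin.val_inj]
  have hP : P ≠ 0 := fun hP => by
    obtain ⟨i, hi⟩ := Function.ne_iff.1 hv
    exact hi (by simpa [hP] using (hcoeff i).symm)
  have hdeg : P.natDegree ≤ m := by
    refine (natDegree_sub_le _ _).trans (max_le ?_ (by simp))
    refine natDegree_sum_le_of_forall_le _ _ fun i _ => ?_
    exact natDegree_C_mul_X_pow_le _ _ |>.trans (by omega)
  have hroots : momentCurve m ⁻¹' hyperplane v c ⊆ (P.roots.toFinset : Set ℝ) := fun t ht => by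
    simp only [mem_preimage, hyperplane, mem_ofPred_eq, momentCurve] at ht
    simp [mem_roots hP, P, eval_finsetSum, ht]
  calc (momentCurve m ⁻¹' hyperplane v c).encard
      ≤ P.roots.toFinset.card := by simpa using encard_le_encard hroots
    _ ≤ m := by exact_mod_cast (Multiset.toFinset_card_le _).trans ((card_roots' P).trans hdeg)

theorem inGenPos_image_momentCurve (m : ℕ) (S : Set ℝ) : InGenPos m (momentCurve m '' S) := by
  refine inGenPos_iff_encard_inter_hyperplane_le.2 fun v hv c => ?_
  calc (momentCurve m '' S ∩ hyperplane v c).encard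
      = (momentCurve m '' (S ∩ momentCurve m ⁻¹' hyperplane v c)).encard := by
        rw [image_inter_preimage]
    _ ≤ (momentCurve m ⁻¹' hyperplane v c).encard :=
        (encard_image_le _ _).trans (encard_le_encard inter_subset_right)
    _ ≤ m := encard_preimage_momentCurve_hyperplane_le hv c

/-- For every dimension `m = n + 1 ≥ 1` there is a set of `m² - m + 1` points of
`ℝᵐ` in general position, and any such set is not T-shaped; consequently
`t(ℝᵐ) ≤ m² - m + 1`. -/
theorem genPos_set_exists_and_not_tShaped (n : ℕ) :
    (∃ C : Set (Fin (n + 1) → ℝ),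
      C.encard = ((n + 1) ^ 2 - (n + 1) + 1 : ℕ) ∧ InGenPos (n + 1) C) ∧
    (∀ C : Set (Fin (n + 1) → ℝ),
      C.encard = ((n + 1) ^ 2 - (n + 1) + 1 : ℕ) → InGenPos (n + 1) C →
        ¬ IsTShaped n C) := by
  set N := (n + 1) ^ 2 - (n + 1) + 1
  have hN : N = n * (n + 1) + 1 := by
    have : (n + 1) ^ 2 = n * (n + 1) + (n + 1) := by ring
    omega
  refine ⟨⟨momentCurve (n + 1) '' ((↑) '' {i : ℕ | i < N}), ?_, inGenPos_image_momentCurve _ _⟩,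
    fun C hC hgen => hgen.not_isTShaped ?_⟩
  · rw [(momentCurve_injective _).injOn.encard_image, Nat.cast_injective.injOn.encard_image,
      Nat.encard_range]
  · rw [hC, hN]
    exact_mod_cast Nat.lt_succ_self _
end

section
/- For every n ≥ 2, t(ℝⁿ) ≥ min{2·t(ℝ^{n−1}), t(ℝ^{n−1}) + n + 1}; that is, every subset C ⊆ ℝⁿ of cardinality strictly less than min{2·t(ℝ^{n−1}), t(ℝ^{n−1}) + n + 1} is T-shaped. -/
/-- `tNum n = t(ℝ^{n+1})`, the least cardinality of a non-T-shaped subset of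
`ℝ^{n+1}`. -/
noncomputable def tNum (n : ℕ) : ℕ :=
  sInf {m : ℕ | ∃ C : Set (Fin (n + 1) → ℝ), C.encard = m ∧ ¬ IsTShaped n C}

/-! Rotating a supporting hyperplane of a finite `C ⊆ ℝ^{n+2}` about its contact points yields,
unless `C` lies in a hyperplane, an affine `f ≥ 0` on `C` whose zero set contains at least `n + 2`
points of `C`, so at most `t = t(ℝ^{n+1})` points of `C` lie off it. If exactly `t` do, either two
of them at different heights can be identified by projecting along their difference, or they all
lie on one parallel hyperplane, which then supports `C` with the fewer than `t` points of the first
facet off it. Projecting the points off the facet along a direction `v` transversal to it gives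
fewer than `t` points of `ℝ^{n+1}`, which are mapped into `ℝ × T_n` by some `g`; then
`x ↦ (g (P x), f x)` maps `C` into `ℝ × T_{n+1}`, as the points with `f x ≠ 0` have `f x > 0`. -/

open Module Finset

theorem Finset.exists_max_mul_le {α : Type*} (S : Finset α) {f g : α → ℝ}
    (hf : ∀ x ∈ S, 0 ≤ f x) (hg : ∃ b ∈ S, 0 < g b) :
    ∃ s : ℝ, (∀ x ∈ S, s * g x ≤ f x) ∧ ∃ b ∈ S, 0 < g b ∧ f b = s * g b := by
  obtain ⟨b, hb, hmin⟩ := (S.filter (0 < g ·)).exists_min_image (fun x => f x / g x)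
    (by simpa [Finset.Nonempty] using hg)
  rw [Finset.mem_filter] at hb
  have hs : 0 ≤ f b / g b := div_nonneg (hf b hb.1) hb.2.le
  refine ⟨f b / g b, fun x hx => ?_, b, hb.1, hb.2, (div_mul_cancel₀ _ hb.2.ne').symm⟩
  rcases le_or_gt (g x) 0 with hgx | hgx
  · nlinarith [hf x hx]
  · exact (le_div_iff₀ hgx).mp (hmin x (Finset.mem_filter.mpr ⟨hx, hgx⟩))

theorem Finset.encard_image_lt_card {α β : Type*} {B : Finset α} {φ : α → β} {p q : α}
    (hp : p ∈ B) (hq : q ∈ B) (hpq : p ≠ q) (h : φ p = φ q) : (φ '' ↑B).encard < #B := by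
  classical
  have hsub : φ '' ↑B ⊆ φ '' ↑(B.erase p) := by
    rintro _ ⟨x, hx, rfl⟩
    by_cases hxp : x = p
    · exact ⟨q, Finset.mem_erase.mpr ⟨hpq.symm, hq⟩, hxp ▸ h.symm⟩
    · exact ⟨x, Finset.mem_erase.mpr ⟨hxp, hx⟩, rfl⟩
  calc (φ '' ↑B).encard ≤ #(B.erase p) :=
        (Set.encard_le_encard hsub).trans
          ((Set.encard_image_le _ _).trans_eq (Set.encard_coe_eq_coe_finsetCard _))
    _ < #B := by exact_mod_cast Finset.card_erase_lt_of_mem hp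

theorem exists_linearMap_ker_eq_span {E : Type*} [AddCommGroup E] [Module ℝ E]
    [FiniteDimensional ℝ E] {m : ℕ} (hE : finrank ℝ E = m + 1) {v : E} (hv : v ≠ 0) :
    ∃ P : E →ₗ[ℝ] (Fin m → ℝ), LinearMap.ker P = ℝ ∙ v := by
  have hQ : finrank ℝ (E ⧸ ℝ ∙ v) = finrank ℝ (Fin m → ℝ) := by
    have := (ℝ ∙ v).finrank_quotient_add_finrank
    rw [finrank_span_singleton hv, hE] at this
    rw [finrank_fin_fun]
    omega
  refine ⟨(LinearEquiv.ofFinrankEq _ _ hQ).toLinearMap ∘ₗ (ℝ ∙ v).mkQ, ?_⟩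
  rw [LinearEquiv.ker_comp, Submodule.ker_mkQ]

section Supporting

variable {E : Type*} [AddCommGroup E] [Module ℝ E] [FiniteDimensional ℝ E]

theorem exists_affineMap_vanishing_of_card_lt {A : Finset E} (hA : A.Nonempty)
    (hAE : #A < finrank ℝ E) (u : E) :
    ∃ g : E →ᵃ[ℝ] ℝ, g.linear ≠ 0 ∧ g.linear u = 0 ∧ ∀ a ∈ A, g a = 0 := by
  classical
  obtain ⟨a₀, ha₀⟩ := hA
  have hA_pos : 0 < #A := card_pos.mpr ⟨a₀, ha₀⟩
  let W := vectorSpan ℝ (A : Set E) ⊔ ℝ ∙ u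
  have hW : finrank ℝ W < finrank ℝ E := calc
    finrank ℝ W ≤ finrank ℝ (vectorSpan ℝ (A : Set E)) + finrank ℝ (ℝ ∙ u) :=
      Submodule.finrank_add_le_finrank_add_finrank _ _
    _ ≤ (#A - 1) + 1 := by
      gcongr
      · have := finrank_vectorSpan_image_finset_le ℝ id A (Nat.succ_pred_eq_of_pos hA_pos).symm
        rwa [image_id] at this
      · simpa using finrank_span_le_card ({u} : Set E)
    _ < finrank ℝ E := by omega
  obtain ⟨χ, hχ, hWχ⟩ := W.exists_le_ker_of_lt_top (Submodule.lt_top_of_finrank_lt_finrank hW)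
  refine ⟨χ.toAffineMap - AffineMap.const ℝ E (χ a₀), by simpa using hχ,
    by simpa using hWχ (Submodule.mem_sup_right (Submodule.mem_span_singleton_self u)),
    fun a ha => ?_⟩
  have := hWχ (Submodule.mem_sup_left (vsub_mem_vectorSpan ℝ ha ha₀))
  simp_all [sub_eq_zero]

theorem exists_supporting_lt_card_zeros {S : Finset E}
    (hS : ∀ g : E →ᵃ[ℝ] ℝ, g.linear ≠ 0 → ∃ x ∈ S, g x ≠ 0)
    {f : E →ᵃ[ℝ] ℝ} (hf : f.linear ≠ 0) (hfS : ∀ x ∈ S, 0 ≤ f x)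
    (hA : (S.filter (f · = 0)).Nonempty) (hAE : #(S.filter (f · = 0)) < finrank ℝ E) :
    ∃ f' : E →ᵃ[ℝ] ℝ, f'.linear ≠ 0 ∧ (∀ x ∈ S, 0 ≤ f' x) ∧
      #(S.filter (f · = 0)) < #(S.filter (f' · = 0)) := by
  classical
  obtain ⟨u, hu⟩ := DFunLike.ne_iff.mp hf
  obtain ⟨g, hg, hgu, hgA⟩ := exists_affineMap_vanishing_of_card_lt hA hAE u
  obtain ⟨g, hgu, hgA, hg_pos⟩ : ∃ g : E →ᵃ[ℝ] ℝ, g.linear u = 0 ∧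
      (∀ a ∈ S.filter (f · = 0), g a = 0) ∧ ∃ b ∈ S, 0 < g b := by
    obtain ⟨x, hx, hgx⟩ := hS g hg
    rcases hgx.lt_or_gt with hlt | hgt
    · exact ⟨-g, by simp [hgu], by simp +contextual [hgA], x, hx, by simpa using hlt⟩
    · exact ⟨g, hgu, hgA, x, hx, hgt⟩
  -- Tilting `f` by the largest `s` with `s * g ≤ f` on `S` keeps the zeros of `f`, where `g`
  -- vanishes, and adds a zero `b`; `g.linear u = 0` keeps the tilted map nonconstant.
  obtain ⟨s, hs, b, hb, hgb, hfb⟩ := S.exists_max_mul_le hfS hg_pos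
  have hbA : b ∉ S.filter (f · = 0) := fun hbA => hgb.ne' (hgA b hbA)
  refine ⟨f - s • g, ?_, fun x hx => by simpa using hs x hx, ?_⟩
  · refine DFunLike.ne_iff.mpr ⟨u, ?_⟩
    simpa [hgu] using hu
  · calc #(S.filter (f · = 0)) < #(insert b (S.filter (f · = 0))) :=
          card_lt_card (ssubset_insert hbA)
      _ ≤ #(S.filter ((f - s • g) · = 0)) := by
        refine card_le_card (insert_subset ?_ fun a ha => ?_)
        · simp [hb, hfb]
        · simp_all

theorem exists_supporting_finrank_le_card_zeros [Nontrivial E] {S : Finset E}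
    (hS : ∀ g : E →ᵃ[ℝ] ℝ, g.linear ≠ 0 → ∃ x ∈ S, g x ≠ 0) :
    ∃ f : E →ᵃ[ℝ] ℝ, f.linear ≠ 0 ∧ (∀ x ∈ S, 0 ≤ f x) ∧
      finrank ℝ E ≤ #(S.filter (f · = 0)) := by
  suffices ∀ k ≤ finrank ℝ E, ∃ f : E →ᵃ[ℝ] ℝ, f.linear ≠ 0 ∧ (∀ x ∈ S, 0 ≤ f x) ∧
      (S.filter (f · = 0)).Nonempty ∧ k ≤ #(S.filter (f · = 0)) by
    obtain ⟨f, hf, hfS, -, hcard⟩ := this _ le_rfl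
    exact ⟨f, hf, hfS, hcard⟩
  intro k hk
  induction k with
  | zero =>
    obtain ⟨χ, hχ⟩ := exists_ne (0 : E →ₗ[ℝ] ℝ)
    obtain ⟨x, hx, -⟩ := hS χ.toAffineMap hχ
    obtain ⟨x₀, hx₀, hmin⟩ := S.exists_min_image χ ⟨x, hx⟩
    refine ⟨χ.toAffineMap - AffineMap.const ℝ E (χ x₀), by simpa using hχ,
      fun y hy => by simpa using hmin y hy, ⟨x₀, mem_filter.mpr ⟨hx₀, by simp⟩⟩, Nat.zero_le _⟩
  | succ k ih =>
    obtain ⟨f, hf, hfS, hA, hk'⟩ := ih (by omega)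
    by_cases hlt : k + 1 ≤ #(S.filter (f · = 0))
    · exact ⟨f, hf, hfS, hA, hlt⟩
    obtain ⟨f', hf', hf'S, hcard⟩ :=
      exists_supporting_lt_card_zeros hS hf hfS hA (by omega)
    exact ⟨f', hf', hf'S, card_pos.mp (by omega), by omega⟩

theorem exists_supporting_encard_image_lt [Nontrivial E] (F : Type*) [AddCommGroup F]
    [Module ℝ F] (S : Finset E) {t : ℕ} (ht : 0 < t) (hS₁ : #S ≤ t + finrank ℝ E)
    (hS₂ : #S < 2 * t) :
    ∃ f : E →ᵃ[ℝ] ℝ, ∃ v : E, f.linear v ≠ 0 ∧ (∀ x ∈ S, 0 ≤ f x) ∧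
      ∀ P : E →ₗ[ℝ] F, P v = 0 → (P '' ↑(S.filter (f · ≠ 0))).encard < t := by
  classical
  by_cases hdeg : ∃ g : E →ᵃ[ℝ] ℝ, g.linear ≠ 0 ∧ ∀ x ∈ S, g x = 0
  · obtain ⟨g, hg, hgS⟩ := hdeg
    obtain ⟨v, hv⟩ := DFunLike.ne_iff.mp hg
    have hB : S.filter (g · ≠ 0) = ∅ := filter_eq_empty_iff.mpr fun x hx => not_not.mpr (hgS x hx)
    exact ⟨g, v, hv, fun x hx => (hgS x hx).ge, fun P _ => by simp [hB, ht]⟩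
  push Not at hdeg
  obtain ⟨f, hf, hfS, hA⟩ := exists_supporting_finrank_le_card_zeros hdeg
  have hAB : #(S.filter (f · = 0)) + #(S.filter (f · ≠ 0)) = #S :=
    card_filter_add_card_filter_not _
  obtain ⟨v, hv⟩ := DFunLike.ne_iff.mp hf
  rcases (show #(S.filter (f · ≠ 0)) ≤ t by omega).lt_or_eq with hBt | hBt
  · exact ⟨f, v, hv, hfS, fun P _ =>
      (Set.encard_image_le _ _).trans_lt
        (by rw [Set.encard_coe_eq_coe_finsetCard]; exact_mod_cast hBt)⟩
  by_cases hconst : ∃ p ∈ S.filter (f · ≠ 0), ∃ q ∈ S.filter (f · ≠ 0), f p ≠ f q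
  · obtain ⟨p, hp, q, hq, hpq⟩ := hconst
    refine ⟨f, p - q, ?_, hfS, fun P hP => ?_⟩
    · rwa [← vsub_eq_sub, f.linearMap_vsub, vsub_eq_sub, sub_ne_zero]
    · rw [map_sub, sub_eq_zero] at hP
      rw [← hBt]
      exact encard_image_lt_card hp hq (ne_of_apply_ne f hpq) hP
  -- The points off the zero set of `f` lie on one parallel hyperplane, which also supports `S`.
  push Not at hconst
  obtain ⟨b, hb⟩ : (S.filter (f · ≠ 0)).Nonempty := card_pos.mp (by omega)
  have hB : ∀ x ∈ S, f x ≠ 0 → f x = f b := fun x hx hfx =>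
    hconst x (mem_filter.mpr ⟨hx, hfx⟩) b hb
  refine ⟨AffineMap.const ℝ E (f b) - f, v, by simpa using hv, fun x hx => ?_, fun P _ => ?_⟩
  · by_cases hfx : f x = 0
    · simpa [hfx] using hfS b (mem_filter.mp hb).1
    · simp [hB x hx hfx]
  · have hsub : S.filter ((AffineMap.const ℝ E (f b) - f) · ≠ 0) ⊆ S.filter (f · = 0) :=
      fun x hx => by
        simp only [mem_filter] at hx ⊢
        exact ⟨hx.1, by_contra fun hfx => hx.2 (by simp [hB x hx.1 hfx])⟩
    calc _ ≤ (#(S.filter ((AffineMap.const ℝ E (f b) - f) · ≠ 0)) : ℕ∞) :=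
          (Set.encard_image_le _ _).trans_eq (Set.encard_coe_eq_coe_finsetCard _)
      _ < t := by exact_mod_cast (card_le_card hsub).trans_lt (by omega)

end Supporting

theorem isTShaped_of_encard_lt_tNum {n : ℕ} {D : Set (Fin (n + 1) → ℝ)}
    (hD : D.encard < tNum n) : IsTShaped n D := by
  by_contra hnot
  have hfin : D.Finite := Set.finite_of_encard_le_coe hD.le
  rw [← hfin.cast_ncard_eq, Nat.cast_lt] at hD
  have hmem : D.ncard ∈ {m : ℕ | ∃ C : Set (Fin (n + 1) → ℝ), C.encard = m ∧ ¬ IsTShaped n C} :=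
    ⟨D, hfin.cast_ncard_eq.symm, hnot⟩
  exact (Nat.sInf_le hmem).not_gt hD

theorem isTShaped_succ_of_supporting {n : ℕ} {C : Set (Fin (n + 2) → ℝ)}
    (f : (Fin (n + 2) → ℝ) →ᵃ[ℝ] ℝ) (P : (Fin (n + 2) → ℝ) →ₗ[ℝ] (Fin (n + 1) → ℝ))
    (hPf : ∀ y, P y = 0 → f.linear y = 0 → y = 0) (hf : ∀ x ∈ C, 0 ≤ f x)
    (hD : IsTShaped n (P '' {x ∈ C | f x ≠ 0})) : IsTShaped (n + 1) C := by
  obtain ⟨g, hg⟩ := hD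
  let F : (Fin (n + 2) → ℝ) →ᵃ[ℝ] (Fin (n + 2) → ℝ) := AffineMap.pi <|
    Fin.lastCases f fun i => (AffineMap.proj i).comp (g.toAffineMap.comp P.toAffineMap)
  have hF_last : ∀ x, F x (Fin.last _) = f x := by simp [F]
  have hF_castSucc : ∀ x i, F x (Fin.castSucc i) = g (P x) i := by simp [F]
  have hF_inj : Function.Injective F.linear := by
    rw [← LinearMap.ker_eq_bot, LinearMap.ker_eq_bot']
    intro y hy
    have hgP : g.linear (P y) = 0 := funext fun i => by
      simpa [F] using congrFun hy (Fin.castSucc i)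
    refine hPf y (g.linear.map_eq_zero_iff.mp hgP) ?_
    simpa [F] using congrFun hy (Fin.last _)
  have hF_bij : Function.Bijective F :=
    F.linear_bijective_iff.mp ⟨hF_inj, LinearMap.injective_iff_surjective.mp hF_inj⟩
  refine ⟨AffineEquiv.ofBijective hF_bij, fun x hx => ?_⟩
  show (fun i : Fin (n + 1) => F x i.succ) ∈ Tset (n + 1)
  simp only [Tset, Set.mem_ofPred_eq, Fin.succ_last, hF_last, Fin.succ_castSucc, hF_castSucc]
  by_cases hfx : f x = 0
  · exact .inl hfx
  · exact .inr ⟨hg (P x) ⟨x, ⟨hx, hfx⟩, rfl⟩, hf x hx⟩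

/-- For every dimension `n + 2 ≥ 2`: any subset of `ℝ^{n+2}` of cardinality
strictly less than `min (2 ⬝ t(ℝ^{n+1})) (t(ℝ^{n+1}) + (n + 2) + 1)` is
T-shaped, i.e. `t(ℝ^{n+2}) ≥ min (2 t(ℝ^{n+1})) (t(ℝ^{n+1}) + (n+2) + 1)`. -/
theorem tNum_recursive_lower_bound (n : ℕ) (C : Set (Fin (n + 2) → ℝ))
    (hC : C.encard < (min (2 * tNum n) (tNum n + (n + 2) + 1) : ℕ)) :
    IsTShaped (n + 1) C := by
  obtain ⟨S, rfl⟩ := (Set.finite_of_encard_le_coe hC.le).exists_finset_coe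
  rw [Set.encard_coe_eq_coe_finsetCard, Nat.cast_lt] at hC
  obtain ⟨f, v, hv, hfS, hP⟩ := exists_supporting_encard_image_lt (Fin (n + 1) → ℝ) S
    (t := tNum n) (by omega) (by rw [finrank_fin_fun]; omega) (by omega)
  obtain ⟨P, hPker⟩ := exists_linearMap_ker_eq_span (finrank_fin_fun ℝ)
    (ne_of_apply_ne f.linear (by simpa using hv))
  have hPv : P v = 0 := LinearMap.mem_ker.mp (hPker ▸ Submodule.mem_span_singleton_self v)
  refine isTShaped_succ_of_supporting f P (fun y hy hfy => ?_) hfS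
    (isTShaped_of_encard_lt_tNum (by simpa using hP P hPv))
  obtain ⟨r, rfl⟩ := Submodule.mem_span_singleton.mp (hPker ▸ LinearMap.mem_ker.mpr hy)
  simp_all
end

section
/- For every k ≥ 2, the Euclidean space ℝ^k can be partitioned into k+1 Borel sets such that no unbounded subset of any piece is symmetric with respect to a point of ℝ^k; equivalently, there is a Borel (k+1)-coloring χ : ℝ^k → {0,…,k} with no unbounded monochromatic set S satisfying S = 2c − S for some c ∈ ℝ^k. -/
/-! Colour `x` by the least index `i` maximizing `L i x`, where `L 0, …, L k` are linear
functionals summing to zero. On a set of colour `i`, `L i` is the largest of numbers summing to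
zero, hence `L i ≥ 0`; if the set is symmetric about `c`, the same at `2c - x` gives
`L i x ≤ 2 L i c`. So every `L j ≤ L i` is bounded above on the set, and by the symmetry also
below. When the coordinates are among the `L j`, the set is bounded. -/

open Set

section FirstIndex

variable {α ι : Type*} [LinearOrder ι] [WellFoundedLT ι] (P : ι → Set α)
  (hP : ∀ x, ∃ i, x ∈ P i)

noncomputable def firstIndex (x : α) : ι :=
  wellFounded_lt.min {i | x ∈ P i} (hP x)

variable {P}

theorem mem_firstIndex (x : α) : x ∈ P (firstIndex P hP x) :=
  wellFounded_lt.min_mem _ (hP x)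

theorem firstIndex_eq_iff {x : α} {i : ι} :
    firstIndex P hP x = i ↔ x ∈ P i ∧ ∀ j < i, x ∉ P j := by
  constructor
  · rintro rfl
    exact ⟨mem_firstIndex hP x, fun j hj hx => wellFounded_lt.not_lt_min {j | x ∈ P j} hx hj⟩
  · rintro ⟨hi, hlt⟩
    exact wellFounded_lt.min_eq_of_forall_not_lt (s := {j | x ∈ P j}) hi
      fun j hj hji => hlt j hji hj

theorem preimage_firstIndex_singleton (i : ι) :
    firstIndex P hP ⁻¹' {i} = P i \ ⋃ j < i, P j := by
  ext x
  simp [firstIndex_eq_iff]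

theorem measurable_firstIndex [MeasurableSpace α] [MeasurableSpace ι] [Countable ι]
    (hmeas : ∀ i, MeasurableSet (P i)) : Measurable (firstIndex P hP) :=
  measurable_to_countable' fun i => by
    rw [preimage_firstIndex_singleton]
    exact (hmeas i).diff (.iUnion fun j => .iUnion fun _ => hmeas j)

end FirstIndex

section DominanceCone

variable {E ι : Type*} [AddCommGroup E] [Module ℝ E] [TopologicalSpace E]
  (L : ι → E →L[ℝ] ℝ)

def dominanceCone (i : ι) : Set E := {x | ∀ j, L j x ≤ L i x}

theorem exists_mem_dominanceCone [Finite ι] [Nonempty ι] (x : E) :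
    ∃ i, x ∈ dominanceCone L i :=
  Finite.exists_max fun i => L i x

theorem isClosed_dominanceCone (i : ι) : IsClosed (dominanceCone L i) := by
  simp only [dominanceCone, ofPred_forall]
  exact isClosed_iInter fun j => isClosed_le (L j).continuous (L i).continuous

variable {L} [Fintype ι]

theorem nonneg_of_mem_dominanceCone (hL : ∀ x, ∑ j, L j x = 0) {x : E} {i : ι}
    (hx : x ∈ dominanceCone L i) : 0 ≤ L i x := by
  have h := Finset.sum_le_card_nsmul Finset.univ (fun j => L j x) (L i x) fun j _ => hx j
  rw [hL, nsmul_eq_mul] at h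
  exact nonneg_of_mul_nonneg_right h
    (by exact_mod_cast Finset.card_pos.2 ⟨i, Finset.mem_univ i⟩)

theorem mem_Icc_of_mem_dominanceCone_of_reflect (hL : ∀ x, ∑ j, L j x = 0) {x c : E} {i : ι}
    (hx : x ∈ dominanceCone L i) (hx' : (2 : ℝ) • c - x ∈ dominanceCone L i) (j : ι) :
    L j x ∈ Icc (2 * L j c - 2 * L i c) (2 * L i c) := by
  have hL_reflect : ∀ t, L t ((2 : ℝ) • c - x) = 2 * L t c - L t x := by simp
  have hx_nonneg := nonneg_of_mem_dominanceCone hL hx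
  have hx'_nonneg := nonneg_of_mem_dominanceCone hL hx'
  have hx'_le := hx' j
  simp only [hL_reflect] at hx'_nonneg hx'_le
  exact ⟨by linarith, by linarith [hx j]⟩

theorem isBounded_image_of_subset_dominanceCone (hL : ∀ x, ∑ j, L j x = 0) {S : Set E} {c : E}
    {i : ι} (hS : S ⊆ dominanceCone L i) (hreflect : ∀ x ∈ S, (2 : ℝ) • c - x ∈ S)
    (j : ι) :
    Bornology.IsBounded (L j '' S) :=
  (Metric.isBounded_Icc (2 * L j c - 2 * L i c) (2 * L i c)).subset <| by
    rintro _ ⟨x, hx, rfl⟩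
    exact mem_Icc_of_mem_dominanceCone_of_reflect hL (hS hx) (hS (hreflect x hx)) j

end DominanceCone

/-- With `L = simplexFunctional k`, `dominanceCone L i` is the cone over the facet `{L i = 1}` of
the simplex `{x | ∀ j, L j x ≤ 1}`, so `firstIndex` of these cones is the facet colouring. -/
noncomputable def simplexFunctional (k : ℕ) : Fin (k + 1) → (Fin k → ℝ) →L[ℝ] ℝ :=
  Fin.lastCases (-∑ t, ContinuousLinearMap.proj t) ContinuousLinearMap.proj

theorem simplexFunctional_castSucc (k : ℕ) (t : Fin k) :
    simplexFunctional k t.castSucc = ContinuousLinearMap.proj t :=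
  Fin.lastCases_castSucc t

theorem sum_simplexFunctional_apply (k : ℕ) (x : Fin k → ℝ) :
    ∑ j, simplexFunctional k j x = 0 := by
  simp [Fin.sum_univ_castSucc, simplexFunctional]

theorem exists_borel_coloring_no_unbounded_symmetric_general (k : ℕ) :
    ∃ χ : (Fin k → ℝ) → Fin (k + 1), Measurable χ ∧
      ∀ (S : Set (Fin k → ℝ)) (i : Fin (k + 1)) (c : Fin k → ℝ),
        (∀ x ∈ S, χ x = i) → S = (fun x => (2 : ℝ) • c - x) '' S →
          Bornology.IsBounded S := by
  have hcover := exists_mem_dominanceCone (simplexFunctional k)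
  refine ⟨firstIndex _ hcover,
    measurable_firstIndex hcover fun i => (isClosed_dominanceCone _ i).measurableSet, ?_⟩
  intro S i c hcolor hsym
  have hcone : S ⊆ dominanceCone (simplexFunctional k) i := fun x hx =>
    hcolor x hx ▸ mem_firstIndex hcover x
  have hreflect : ∀ x ∈ S, (2 : ℝ) • c - x ∈ S := by
    intro x hx
    rw [hsym] at hx
    obtain ⟨y, hy, rfl⟩ := hx
    simpa using hy
  refine Bornology.forall_isBounded_image_eval_iff.1 fun t => ?_
  have := isBounded_image_of_subset_dominanceCone (sum_simplexFunctional_apply k) hcone hreflect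
    t.castSucc
  rwa [simplexFunctional_castSucc] at this

/-- For every `k ≥ 2` there is a Borel `(k+1)`-coloring of `ℝᵏ` such that every
monochromatic subset that is symmetric with respect to some point `c ∈ ℝᵏ`
(i.e. `S = 2c - S`) is bounded. -/
theorem exists_borel_coloring_no_unbounded_symmetric (k : ℕ) (hk : 2 ≤ k) :
    ∃ χ : (Fin k → ℝ) → Fin (k + 1), Measurable χ ∧
      ∀ (S : Set (Fin k → ℝ)) (i : Fin (k + 1)) (c : Fin k → ℝ),
        (∀ x ∈ S, χ x = i) → S = (fun x => (2 : ℝ) • c - x) '' S →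
          Bornology.IsBounded S :=
  exists_borel_coloring_no_unbounded_symmetric_general k
end

section
/- Let X be a topological group, k ≥ 2, and C ⊆ X a subset that is not k-centerpole in X. Then C, viewed as a subset C × {0} of the product group X × ℝ, is not k-centerpole in X × ℝ. -/
/-!
Given a colouring `χ` of `X`, colour `X × ℝ` by `χ` on `X × {0}`, by one colour on the lower
half-space and by another on the upper one. A set symmetric about `(c, 0)` is invariant under
`(x, t) ↦ (c - x + c, -t)`, which swaps the two half-spaces, so a monochromatic such set lies in
`X × {0}`. There it is a monochromatic set for `χ`, symmetric about `c` and, being the image of a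
set of `X` under a continuous homomorphism, unbounded in `X` if it is unbounded in `X × ℝ`.
-/

/-- A subset `B` of a topological additive group is totally bounded if every
neighborhood `U` of `0` admits finitely many translates covering `B`. -/
def IsTotBounded {G : Type*} [AddGroup G] [TopologicalSpace G] (B : Set G) : Prop :=
  ∀ U ∈ nhds (0 : G), ∃ F : Set G, F.Finite ∧ B ⊆ ⋃ x ∈ F, (fun u => x + u) '' U

/-- `C ⊆ G` is `k`-centerpole: every `k`-coloring of `G` admits an unbounded
monochromatic subset `S` symmetric with respect to some `c ∈ C`, in the sense
that `S - c = c - S` (written multiplicatively: `S·c⁻¹ = c·S⁻¹`). -/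
def IsCenterpole {G : Type*} [AddGroup G] [TopologicalSpace G]
    (k : ℕ) (C : Set G) : Prop :=
  ∀ χ : G → Fin k, ∃ c ∈ C, ∃ S : Set G,
    (∃ i : Fin k, ∀ x ∈ S, χ x = i) ∧ ¬ IsTotBounded S ∧
    (fun s => s + -c) '' S = (fun s => c + -s) '' S

def IsSymmetricAbout {G : Type*} [AddGroup G] (c : G) (S : Set G) : Prop :=
  (fun s => s + -c) '' S = (fun s => c + -s) '' S

section Symmetric

variable {G : Type*} [AddGroup G]

theorem isSymmetricAbout_iff {c : G} {S : Set G} :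
    IsSymmetricAbout c S ↔ ∀ s ∈ S, c + -s + c ∈ S := by
  constructor
  · intro h s hs
    obtain ⟨s', hs', hs's⟩ : s + -c ∈ (fun s => c + -s) '' S :=
      h ▸ Set.mem_image_of_mem _ hs
    have : s' = c + -s + c := calc
      s' = -(-c + (c + -s')) := by simp only [neg_add_cancel_left, neg_neg]
      _ = c + -s + c := by simp only [hs's, neg_add_rev, neg_neg, add_assoc]
    exact this ▸ hs'
  · intro h
    apply Set.Subset.antisymm
    · rintro _ ⟨s, hs, rfl⟩
      refine ⟨c + -s + c, h s hs, ?_⟩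
      simp only [neg_add_rev, neg_neg, add_assoc, add_neg_cancel_left]
    · rintro _ ⟨s, hs, rfl⟩
      exact ⟨c + -s + c, h s hs, add_neg_cancel_right _ _⟩

theorem IsSymmetricAbout.preimage {H : Type*} [AddGroup H] (f : G →+ H) {c : G} {S : Set H}
    (hS : IsSymmetricAbout (f c) S) : IsSymmetricAbout c (f ⁻¹' S) := by
  rw [isSymmetricAbout_iff] at hS ⊢
  intro s hs
  simpa only [Set.mem_preimage, map_add, map_neg] using hS (f s) hs

end Symmetric

theorem IsTotBounded.image {G H : Type*} [AddGroup G] [TopologicalSpace G] [AddGroup H]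
    [TopologicalSpace H] (f : G →+ H) (hf : Continuous f) {T : Set G} (hT : IsTotBounded T) :
    IsTotBounded (f '' T) := by
  intro U hU
  have hU' : f ⁻¹' U ∈ nhds (0 : G) := hf.continuousAt.preimage_mem_nhds (by rwa [map_zero])
  obtain ⟨F, hF, hTF⟩ := hT _ hU'
  refine ⟨f '' F, hF.image f, ?_⟩
  rintro _ ⟨x, hx, rfl⟩
  obtain ⟨y, hy, u, hu, rfl⟩ := Set.mem_iUnion₂.1 (hTF hx)
  exact Set.mem_iUnion₂.2 ⟨f y, Set.mem_image_of_mem f hy, f u, hu, (map_add f y u).symm⟩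

noncomputable def prodRealColoring {X : Type*} {k : ℕ} (χ : X → Fin k) (a b : Fin k)
    (p : X × ℝ) : Fin k :=
  if p.2 = 0 then χ p.1 else if p.2 < 0 then a else b

section ProdRealColoring

variable {X : Type*} {k : ℕ} {χ : X → Fin k} {a b : Fin k}

theorem prodRealColoring_of_neg {p : X × ℝ} (hp : p.2 < 0) : prodRealColoring χ a b p = a := by
  simp [prodRealColoring, hp.ne, hp]

theorem prodRealColoring_of_pos {p : X × ℝ} (hp : 0 < p.2) : prodRealColoring χ a b p = b := by
  simp [prodRealColoring, hp.ne', hp.not_gt]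

theorem snd_eq_zero_of_isSymmetricAbout [AddGroup X] (hab : a ≠ b) {c : X} {S : Set (X × ℝ)}
    (hS : IsSymmetricAbout (c, 0) S) {i : Fin k}
    (hmono : ∀ p ∈ S, prodRealColoring χ a b p = i) :
    ∀ p ∈ S, p.2 = 0 := by
  intro p hp
  set q := ((c, 0) : X × ℝ) + -p + (c, 0)
  have hq : q ∈ S := isSymmetricAbout_iff.1 hS p hp
  have hq₂ : q.2 = -p.2 := by simp [q]
  have hpq : prodRealColoring χ a b p = prodRealColoring χ a b q :=
    (hmono p hp).trans (hmono q hq).symm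
  rcases lt_trichotomy p.2 0 with hneg | hzero | hpos
  · rw [prodRealColoring_of_neg hneg, prodRealColoring_of_pos (by linarith)] at hpq
    exact absurd hpq hab
  · exact hzero
  · rw [prodRealColoring_of_pos hpos, prodRealColoring_of_neg (by linarith)] at hpq
    exact absurd hpq.symm hab

end ProdRealColoring

theorem not_centerpole_prod_real_general {X : Type*} [AddGroup X] [TopologicalSpace X]
    (k : ℕ) (hk : 2 ≤ k) (C : Set X)
    (hC : ¬ IsCenterpole k C) :
    ¬ IsCenterpole k ((fun x => (x, (0 : ℝ))) '' C : Set (X × ℝ)) := by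
  intro h
  refine hC fun χ => ?_
  have h01 : (⟨0, by omega⟩ : Fin k) ≠ ⟨1, by omega⟩ := by simp
  obtain ⟨_, ⟨c, hc, rfl⟩, S, ⟨i, hmono⟩, hunb, hsymm⟩ := h (prodRealColoring χ _ _)
  have hflat := snd_eq_zero_of_isSymmetricAbout h01 hsymm hmono
  let ι : X →+ X × ℝ := AddMonoidHom.inl X ℝ
  have hSι : ι '' (ι ⁻¹' S) = S := by
    refine Set.image_preimage_eq_of_subset fun p hp => ⟨p.1, ?_⟩
    simp [ι, ← hflat p hp]
  refine ⟨c, hc, ι ⁻¹' S, ⟨i, fun x hx => ?_⟩, fun hT => hunb ?_,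
    IsSymmetricAbout.preimage ι hsymm⟩
  · simpa [prodRealColoring, ι] using hmono _ hx
  · exact hSι ▸ hT.image ι (continuous_id.prodMk continuous_const)

/-- If `k ≥ 2` and `C ⊆ X` is not `k`-centerpole in `X`, then `C × {0}` is not
`k`-centerpole in `X × ℝ`. -/
theorem not_centerpole_prod_real {X : Type*} [AddGroup X] [TopologicalSpace X]
    [IsTopologicalAddGroup X] (k : ℕ) (hk : 2 ≤ k) (C : Set X)
    (hC : ¬ IsCenterpole k C) :
    ¬ IsCenterpole k ((fun x => (x, (0 : ℝ))) '' C : Set (X × ℝ)) :=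
  not_centerpole_prod_real_general k hk C hC
end

section
/- Let C ⊆ ℤ^ω (the countable power of ℤ with the product topology) be a countable dense subset and let κ be a cardinal with ω ≤ κ < cov(M). Then for every Borel coloring χ : ℤ^ω → κ there exist a color i, a point c ∈ C, and a nonmeager (hence unbounded) set S ⊆ χ^{−1}(i) with S = 2c − S. -/
/-!
`code x` lists the integer parts of the orbit of `x : ℝ` under `shiftMap`, which maps each cell
`(z, z + 1)` homeomorphically onto `ℝ`, expanding distances at least twice. Every finite word is
read off by `code` on a nonempty open set of reals (`realCylinder`), and these sets shrink to any
point whose orbit avoids `ℤ`, that is, to all but countably many points. Hence preimages under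
`code` of nowhere dense sets are nowhere dense, and a cover of `ℤ^ℕ` by fewer than `cov(M)` meagre
sets would pull back to one of `ℝ`. So some color class `A` is nonmeagre; being Borel, it is
comeagre in a nonempty open set `U`. For `c ∈ C ∩ U` the point reflection `σ` through `c` is a
homeomorphism fixing `c`, so `A ∩ σ⁻¹ A` is `σ`-invariant and comeagre in the open neighbourhood
`U ∩ σ⁻¹ U` of `c`.
-/

/-- `cov(M)`: the least cardinality of a cover of the real line by meager
sets. -/
noncomputable def covMeager : Cardinal :=
  sInf {c : Cardinal | ∃ (ι : Type) (A : ι → Set ℝ),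
    Cardinal.mk ι = c ∧ (∀ i, IsMeagre (A i)) ∧ ⋃ i, A i = Set.univ}

open Set Filter Topology

section Meagre

variable {X Y : Type*} [TopologicalSpace X] [TopologicalSpace Y]

lemma IsNowhereDense.preimage_of_forall_exists_mapsTo {f : X → Y}
    (hf : ∀ U, IsOpen U → U.Nonempty → ∃ V, IsOpen V ∧ V.Nonempty ∧
      ∀ W ⊆ V, IsOpen W → W.Nonempty → ∃ U' ⊆ U, IsOpen U' ∧ U'.Nonempty ∧ MapsTo f U' W)
    {t : Set Y} (ht : IsNowhereDense t) : IsNowhereDense (f ⁻¹' t) := by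
  rw [IsNowhereDense, ← not_nonempty_iff_eq_empty]
  intro hne
  obtain ⟨V, hV, hVne, hVW⟩ := hf _ isOpen_interior hne
  have hW : (V \ closure t).Nonempty := by
    by_contra! h
    have : V ⊆ interior (closure t) := interior_maximal (sdiff_eq_empty.1 h) hV
    exact (ht ▸ this) hVne.some_mem
  obtain ⟨U', hU'sub, hU', ⟨x, hx⟩, hmaps⟩ :=
    hVW _ sdiff_subset (hV.sdiff isClosed_closure) hW
  obtain ⟨p, hpU', hpt⟩ :=
    mem_closure_iff.1 (interior_subset (hU'sub hx)) U' hU' hx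
  exact (hmaps hpU').2 (subset_closure hpt)

lemma IsMeagre.preimage_of_isNowhereDense_preimage {f : X → Y}
    (hf : ∀ t, IsNowhereDense t → IsNowhereDense (f ⁻¹' t)) {s : Set Y} (hs : IsMeagre s) :
    IsMeagre (f ⁻¹' s) := by
  obtain ⟨S, hS, hSc, hsS⟩ := isMeagre_iff_countable_union_isNowhereDense.1 hs
  refine (isMeagre_biUnion hSc fun t ht => (hf t (hS t ht)).isMeagre).mono ?_
  rw [← preimage_iUnion₂, ← sUnion_eq_biUnion]
  exact preimage_mono hsS

lemma isMeagre_congr {s t : Set X} (h : s =ᵇ t) : IsMeagre s ↔ IsMeagre t :=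
  ⟨fun hs => eventuallyEq_empty.1 (h.symm.trans (eventuallyEq_empty.2 hs)),
    fun ht => eventuallyEq_empty.1 (h.trans (eventuallyEq_empty.2 ht))⟩

lemma not_isMeagre_inter_preimage_of_residualEq [BaireSpace X] (σ : X ≃ₜ X) {A U : Set X}
    (hAU : A =ᵇ U) (hU : IsOpen U) {c : X} (hcU : c ∈ U) (hσc : σ c = c) :
    ¬ IsMeagre (A ∩ σ ⁻¹' A) := by
  have hσA : σ ⁻¹' A =ᵇ σ ⁻¹' U :=
    hAU.comp_tendsto (tendsto_residual_of_isOpenMap σ.continuous σ.isOpenMap)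
  rw [isMeagre_congr (hAU.inter hσA)]
  exact not_isMeagre_of_isOpen (hU.inter (hU.preimage σ.continuous))
    ⟨c, hcU, by rwa [mem_preimage, hσc]⟩

end Meagre

lemma Function.Involutive.image_inter_preimage {α : Type*} {f : α → α} (hf : Function.Involutive f)
    (A : Set α) : f '' (A ∩ f ⁻¹' A) = A ∩ f ⁻¹' A := by
  rw [image_eq_preimage_of_inverse hf.leftInverse hf.rightInverse, preimage_inter, hf.preimage,
    inter_comm]

lemma Equiv.pointReflection_eq_two_mul_sub {ι R : Type*} [CommRing R] (c x : ι → R) :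
    Equiv.pointReflection c x = fun n => 2 * c n - x n := by
  ext n
  simp only [Equiv.pointReflection_apply, vsub_eq_sub, vadd_eq_add, Pi.add_apply, Pi.sub_apply]
  ring

theorem covMeager_le_of_isMeagre_preimage {X : Type*} [TopologicalSpace X] {f : ℝ → X}
    (hf : ∀ s, IsMeagre s → IsMeagre (f ⁻¹' s)) {ι : Type} {A : ι → Set X}
    (hA : ∀ i, IsMeagre (A i)) (hcover : ⋃ i, A i = univ) : covMeager ≤ Cardinal.mk ι :=
  csInf_le' ⟨ι, fun i => f ⁻¹' A i, rfl, fun i => hf _ (hA i), by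
    rw [← preimage_iUnion, hcover, preimage_univ]⟩

namespace RealToBaire

noncomputable def squash (t : ℝ) : ℝ := t / (1 + |t|)

noncomputable def unsquash (u : ℝ) : ℝ := u / (1 - |u|)

lemma abs_squash_lt_one (t : ℝ) : |squash t| < 1 := by
  have h : 0 < 1 + |t| := by positivity
  rw [squash, abs_div, abs_of_pos h, div_lt_one h]
  linarith

lemma unsquash_squash (t : ℝ) : unsquash (squash t) = t := by
  have h : 0 < 1 + |t| := by positivity
  have habs : |squash t| = |t| / (1 + |t|) := by rw [squash, abs_div, abs_of_pos h]
  rw [unsquash, habs, squash]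
  field_simp
  ring

lemma squash_unsquash {u : ℝ} (hu : |u| < 1) : squash (unsquash u) = u := by
  have h : 0 < 1 - |u| := by linarith
  have habs : |unsquash u| = |u| / (1 - |u|) := by rw [unsquash, abs_div, abs_of_pos h]
  rw [squash, habs, unsquash]
  field_simp
  ring

lemma abs_squash_sub_squash_le (s t : ℝ) : |squash s - squash t| ≤ |s - t| := by
  have hs : 0 < 1 + |s| := by positivity
  have ht : 0 < 1 + |t| := by positivity
  rw [squash, squash, div_sub_div _ _ hs.ne' ht.ne', abs_div, abs_of_pos (mul_pos hs ht),
    div_le_iff₀ (mul_pos hs ht), abs_le]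
  have p1 := mul_nonneg (abs_nonneg s) (abs_nonneg (s - t))
  have p2 := mul_nonneg (abs_nonneg t) (abs_nonneg (s - t))
  have p3 := mul_nonneg p1 (abs_nonneg t)
  rcases abs_cases s with ⟨hs1, hs2⟩ | ⟨hs1, hs2⟩ <;>
  rcases abs_cases t with ⟨ht1, ht2⟩ | ⟨ht1, ht2⟩ <;>
  rcases abs_cases (s - t) with ⟨h1, h2⟩ | ⟨h1, h2⟩ <;>
  simp only [hs1, ht1, h1] at p1 p2 p3 ⊢ <;> constructor <;> nlinarith

lemma continuousOn_unsquash : ContinuousOn unsquash (Ioo (-1) 1) := by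
  refine continuousOn_id.div (continuousOn_const.sub continuous_abs.continuousOn) fun u hu => ?_
  have : |u| < 1 := abs_lt.2 hu
  linarith

noncomputable def cell (z : ℤ) (t : ℝ) : ℝ := z + (1 + squash t) / 2

noncomputable def shiftMap (x : ℝ) : ℝ := unsquash (2 * Int.fract x - 1)

noncomputable def code (x : ℝ) (n : ℕ) : ℤ := ⌊shiftMap^[n] x⌋

lemma code_succ (x : ℝ) (n : ℕ) : code x (n + 1) = code (shiftMap x) n := by
  rw [code, code, Function.iterate_succ_apply]

lemma cell_mem_Ioo (z : ℤ) (t : ℝ) : cell z t ∈ Ioo (z : ℝ) (z + 1) := by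
  obtain ⟨h1, h2⟩ := abs_lt.1 (abs_squash_lt_one t)
  constructor <;> rw [cell] <;> linarith

lemma floor_eq_of_mem_Ioo {z : ℤ} {x : ℝ} (hx : x ∈ Ioo (z : ℝ) (z + 1)) : ⌊x⌋ = z :=
  Int.floor_eq_iff.2 ⟨hx.1.le, hx.2⟩

lemma fract_eq_of_mem_Ioo {z : ℤ} {x : ℝ} (hx : x ∈ Ioo (z : ℝ) (z + 1)) :
    Int.fract x = x - z := by
  rw [← Int.self_sub_floor, floor_eq_of_mem_Ioo hx]

lemma shiftMap_cell (z : ℤ) (t : ℝ) : shiftMap (cell z t) = t := by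
  rw [shiftMap, fract_eq_of_mem_Ioo (cell_mem_Ioo z t), cell]
  convert unsquash_squash t using 2
  ring

lemma cell_shiftMap {z : ℤ} {x : ℝ} (hx : x ∈ Ioo (z : ℝ) (z + 1)) : cell z (shiftMap x) = x := by
  rw [shiftMap, fract_eq_of_mem_Ioo hx, cell, squash_unsquash]
  · ring
  · rw [abs_lt]; constructor <;> linarith [hx.1, hx.2]

lemma mem_Ioo_floor {x : ℝ} (hx : x ∉ range ((↑) : ℤ → ℝ)) : x ∈ Ioo (⌊x⌋ : ℝ) (⌊x⌋ + 1) :=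
  ⟨(Int.floor_le x).lt_of_ne fun h => hx ⟨_, h⟩, Int.lt_floor_add_one x⟩

lemma abs_cell_sub_cell_le (z : ℤ) (s t : ℝ) : |cell z s - cell z t| ≤ |s - t| / 2 := by
  have h : cell z s - cell z t = (squash s - squash t) / 2 := by rw [cell, cell]; ring
  rw [h, abs_div, abs_two]
  exact div_le_div_of_nonneg_right (abs_squash_sub_squash_le s t) zero_le_two

lemma continuousOn_shiftMap (z : ℤ) : ContinuousOn shiftMap (Ioo (z : ℝ) (z + 1)) := by
  have hmaps : MapsTo (fun x : ℝ => 2 * (x - z) - 1) (Ioo (z : ℝ) (z + 1)) (Ioo (-1) 1) :=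
    fun x hx => ⟨by linarith [hx.1], by linarith [hx.2]⟩
  refine (continuousOn_unsquash.comp (by fun_prop) hmaps).congr fun x hx => ?_
  simp only [Function.comp_apply, shiftMap, fract_eq_of_mem_Ioo hx]

lemma countable_preimage_shiftMap {s : Set ℝ} (hs : s.Countable) :
    (shiftMap ⁻¹' s).Countable := by
  refine ((countable_range ((↑) : ℤ → ℝ)).union
    (countable_iUnion fun z => hs.image (cell z))).mono fun x hx => ?_
  by_cases hint : x ∈ range ((↑) : ℤ → ℝ)
  · exact Or.inl hint
  · exact Or.inr (mem_iUnion.2 ⟨⌊x⌋, shiftMap x, hx, cell_shiftMap (mem_Ioo_floor hint)⟩)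

lemma countable_setOf_exists_iterate_shiftMap_mem_range :
    {x : ℝ | ∃ n, shiftMap^[n] x ∈ range ((↑) : ℤ → ℝ)}.Countable := by
  rw [ofPred_exists]
  refine countable_iUnion fun n => ?_
  induction n with
  | zero => exact countable_range _
  | succ n ih =>
    rw [Function.iterate_succ]
    exact countable_preimage_shiftMap ih

def realCylinder : (ℕ → ℤ) → ℕ → Set ℝ
  | _, 0 => univ
  | y, n + 1 => Ioo (y 0 : ℝ) (y 0 + 1) ∩ shiftMap ⁻¹' realCylinder (fun k => y (k + 1)) n

lemma isOpen_realCylinder (y : ℕ → ℤ) (n : ℕ) : IsOpen (realCylinder y n) := by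
  induction n generalizing y with
  | zero => exact isOpen_univ
  | succ n ih => exact (continuousOn_shiftMap _).isOpen_inter_preimage isOpen_Ioo (ih _)

lemma realCylinder_nonempty (y : ℕ → ℤ) (n : ℕ) : (realCylinder y n).Nonempty := by
  induction n generalizing y with
  | zero => exact univ_nonempty
  | succ n ih =>
    obtain ⟨t, ht⟩ := ih fun k => y (k + 1)
    exact ⟨cell (y 0) t, cell_mem_Ioo _ _, by rwa [mem_preimage, shiftMap_cell]⟩

lemma mapsTo_code_realCylinder (y : ℕ → ℤ) (n : ℕ) :
    MapsTo code (realCylinder y n) (PiNat.cylinder y n) := by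
  induction n generalizing y with
  | zero => simp
  | succ n ih =>
    rintro x ⟨hx, hshift⟩ (_ | i) hi
    · exact floor_eq_of_mem_Ioo hx
    · rw [code_succ]
      exact ih _ hshift i (by omega)

lemma realCylinder_subset_of_mem_cylinder {y y' : ℕ → ℤ} {n m : ℕ}
    (hy : y' ∈ PiNat.cylinder y n) (hnm : n ≤ m) :
    realCylinder y' m ⊆ realCylinder y n := by
  induction n generalizing y y' m with
  | zero => exact subset_univ _
  | succ n ih =>
    obtain ⟨m, rfl⟩ : ∃ k, m = k + 1 := ⟨m - 1, by omega⟩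
    rintro x ⟨hx, hshift⟩
    refine ⟨by rwa [← hy 0 (by omega)], ih (fun i hi => hy (i + 1) (by omega)) (by omega) hshift⟩

lemma mem_realCylinder_code {x : ℝ} (hx : ∀ k, shiftMap^[k] x ∉ range ((↑) : ℤ → ℝ)) (n : ℕ) :
    x ∈ realCylinder (code x) n := by
  induction n generalizing x with
  | zero => trivial
  | succ n ih =>
    refine ⟨mem_Ioo_floor (hx 0), ?_⟩
    have h := ih fun k => by simpa only [Function.iterate_succ_apply] using hx (k + 1)
    simpa only [code_succ, mem_preimage] using h

lemma dist_le_of_mem_realCylinder {y : ℕ → ℤ} {n : ℕ} {s t : ℝ}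
    (hs : s ∈ realCylinder y (n + 1)) (ht : t ∈ realCylinder y (n + 1)) :
    dist s t ≤ (1 / 2) ^ n := by
  induction n generalizing y s t with
  | zero =>
    rw [Real.dist_eq, pow_zero, abs_sub_le_iff]
    constructor <;> linarith [hs.1.1, hs.1.2, ht.1.1, ht.1.2]
  | succ n ih =>
    calc dist s t = |cell (y 0) (shiftMap s) - cell (y 0) (shiftMap t)| := by
          rw [cell_shiftMap hs.1, cell_shiftMap ht.1, Real.dist_eq]
      _ ≤ dist (shiftMap s) (shiftMap t) / 2 := abs_cell_sub_cell_le _ _ _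
      _ ≤ (1 / 2) ^ n / 2 := by gcongr; exact ih (y := fun k => y (k + 1)) hs.2 ht.2
      _ = (1 / 2) ^ (n + 1) := by ring

lemma exists_realCylinder_subset {U : Set ℝ} (hU : IsOpen U) (hne : U.Nonempty) :
    ∃ y n, realCylinder y n ⊆ U := by
  obtain ⟨x, hxU, hx⟩ :=
    (countable_setOf_exists_iterate_shiftMap_mem_range.dense_compl ℝ).inter_open_nonempty U hU hne
  obtain ⟨ε, hε, hball⟩ := Metric.isOpen_iff.1 hU x hxU
  obtain ⟨n, hn⟩ := exists_pow_lt_of_lt_one hε (by norm_num : (1 / 2 : ℝ) < 1)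
  have hgood : ∀ k, shiftMap^[k] x ∉ range ((↑) : ℤ → ℝ) := fun k hk => hx ⟨k, hk⟩
  refine ⟨code x, n + 1, fun t ht => hball ?_⟩
  exact (dist_le_of_mem_realCylinder ht (mem_realCylinder_code hgood _)).trans_lt hn

theorem isNowhereDense_preimage_code {t : Set (ℕ → ℤ)} (ht : IsNowhereDense t) :
    IsNowhereDense (code ⁻¹' t) := by
  refine ht.preimage_of_forall_exists_mapsTo fun U hU hne => ?_
  obtain ⟨y, n, hyU⟩ := exists_realCylinder_subset hU hne
  refine ⟨PiNat.cylinder y n, PiNat.isOpen_cylinder _ y n, ⟨y, PiNat.self_mem_cylinder y n⟩,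
    fun W hWV hW ⟨p, hp⟩ => ?_⟩
  obtain ⟨_, ⟨q, m, rfl⟩, hpq, hqW⟩ :=
    (PiNat.isTopologicalBasis_cylinders _).exists_subset_of_mem_open hp hW
  rw [PiNat.mem_cylinder_iff_eq] at hpq
  refine ⟨realCylinder p (max m n),
    (realCylinder_subset_of_mem_cylinder (hWV hp) (le_max_right _ _)).trans hyU,
    isOpen_realCylinder _ _, realCylinder_nonempty _ _, ?_⟩
  exact (mapsTo_code_realCylinder p _).mono_right
    ((PiNat.cylinder_anti p (le_max_left _ _)).trans (hpq ▸ hqW))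

theorem isMeagre_preimage_code {s : Set (ℕ → ℤ)} (hs : IsMeagre s) : IsMeagre (code ⁻¹' s) :=
  hs.preimage_of_isNowhereDense_preimage fun _ => isNowhereDense_preimage_code

end RealToBaire

theorem countable_dense_centerpole_borel_general (C : Set (ℕ → ℤ)) (hd : Dense C) (ι : Type)
    (hι₂ : Cardinal.mk ι < covMeager) (χ : (ℕ → ℤ) → ι)
    (hχ : ∀ i : ι, MeasurableSet (χ ⁻¹' {i})) :
    ∃ (i : ι) (c : ℕ → ℤ) (S : Set (ℕ → ℤ)), c ∈ C ∧ S ⊆ χ ⁻¹' {i} ∧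
      ¬ IsMeagre S ∧ S = (fun x => (fun n => 2 * c n - x n)) '' S := by
  obtain ⟨i, hi⟩ : ∃ i, ¬ IsMeagre (χ ⁻¹' {i}) := by
    by_contra! h
    have hcover : ⋃ i, χ ⁻¹' {i} = univ := by
      rw [← preimage_iUnion, iUnion_of_singleton, preimage_univ]
    exact (covMeager_le_of_isMeagre_preimage (fun _ => RealToBaire.isMeagre_preimage_code) h
      hcover).not_gt hι₂
  obtain ⟨U, hU, hAU⟩ := (hχ i).residualEq_isOpen
  obtain ⟨c, hcC, hcU⟩ :=
    hd.exists_mem_open hU (nonempty_of_not_isMeagre ((isMeagre_congr hAU).not.1 hi))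
  let σ := Homeomorph.pointReflection c
  refine ⟨i, c, χ ⁻¹' {i} ∩ σ ⁻¹' (χ ⁻¹' {i}), hcC, inter_subset_left,
    not_isMeagre_inter_preimage_of_residualEq σ hAU hU hcU (Equiv.pointReflection_self c), ?_⟩
  have hσ : (fun x n => 2 * c n - x n) = σ :=
    funext fun x => (Equiv.pointReflection_eq_two_mul_sub c x).symm
  rw [hσ]
  exact ((Equiv.pointReflection_involutive c).image_inter_preimage _).symm

/-- Let `C` be a countable dense subset of `ℤ^ω` and `ι` an index type (set of
colors) of cardinality `κ` with `ω ≤ κ < cov(M)`. Then every Borel coloring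
`χ : ℤ^ω → ι` admits a color `i`, a point `c ∈ C`, and a nonmeager (hence
unbounded) set `S` of color `i` with `S = 2c - S`. -/
theorem countable_dense_centerpole_borel (C : Set (ℕ → ℤ)) (hC : C.Countable)
    (hd : Dense C) (ι : Type) (hι₁ : Cardinal.aleph0 ≤ Cardinal.mk ι)
    (hι₂ : Cardinal.mk ι < covMeager) (χ : (ℕ → ℤ) → ι)
    (hχ : ∀ i : ι, MeasurableSet (χ ⁻¹' {i})) :
    ∃ (i : ι) (c : ℕ → ℤ) (S : Set (ℕ → ℤ)), c ∈ C ∧ S ⊆ χ ⁻¹' {i} ∧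
      ¬ IsMeagre S ∧ S = (fun x => (fun n => 2 * c n - x n)) '' S :=
  countable_dense_centerpole_borel_general C hd ι hι₂ χ hχ
end
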